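/- arXiv:2212.11708 — 2 statements merged into one kernel-verified Lean document; each statement's English description precedes it below -/
import Mathlib

section
/- Let H be a positive semidefinite (possibly unbounded) Hamiltonian on a Hilbert space with discrete spectrum, ρ a density operator, and ε ≥ 0. Fix an energy threshold ē ≥ 0 and let P_ē be the spectral projection of H onto the eigenspaces with eigenvalue at most ē. Then every density operator σ with (1/2)‖σ − ρ‖₁ ≤ ε satisfies tr(σH) ≥ tr(P_ē H P_ē ρ) − 2ε·ē. -/
/- STATEMENT 2 (Corollary 1): For a grounded discrete Hamiltonian
H = diag(e₀ ≤ e₁ ≤ ⋯) with eᵢ ≥ 0, a density operator ρ, ε ≥ 0 and an energy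
threshold ē ≥ 0 with spectral projection P_ē onto eigenvalues ≤ ē, every density
operator σ with (1/2)‖σ-ρ‖₁ ≤ ε satisfies tr(σH) ≥ tr(P_ē H P_ē ρ) - 2ε·ē.
(We formalize the Hamiltonian in its eigenbasis as a diagonal matrix.) -/

open Matrix
open scoped ComplexOrder
noncomputable section

def traceNorm {d : ℕ} (A : Matrix (Fin d) (Fin d) ℂ) : ℝ :=
  (((Matrix.posSemidef_conjTranspose_mul_self A).1.eigenvectorUnitary.1 *
    diagonal ((fun x : ℝ => (x : ℂ)) ∘ (√·) ∘ (Matrix.posSemidef_conjTranspose_mul_self A).1.eigenvalues) *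
    (star (Matrix.posSemidef_conjTranspose_mul_self A).1.eigenvectorUnitary :
      Matrix (Fin d) (Fin d) ℂ)).trace).re

def IsDensity {d : ℕ} (ρ : Matrix (Fin d) (Fin d) ℂ) : Prop := ρ.PosSemidef ∧ ρ.trace = 1

/- The projected Hamiltonian P_ē H P_ē is diagonal with entries cᵢ ∈ [0, min(eᵢ, ē)], so
tr(σH) ≥ ∑ cᵢ σᵢᵢ, and it remains to compare ∑ cᵢ σᵢᵢ with ∑ cᵢ ρᵢᵢ. Since -|A| ≤ A ≤ |A| for the
Hermitian A = σ - ρ, each |Aᵢᵢ| is at most |A|ᵢᵢ, whence |∑ cᵢ Aᵢᵢ| ≤ ē tr|A| = ē ‖σ - ρ‖₁ ≤ 2εē. -/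

namespace Matrix

open scoped MatrixOrder

theorem PosSemidef.re_diag_nonneg {n : Type*} {B : Matrix n n ℂ} (hB : B.PosSemidef) (i : n) :
    0 ≤ (B i i).re :=
  (Complex.nonneg_iff.mp hB.diag_nonneg).1

section

variable {n : Type*} [Fintype n] [DecidableEq n]

theorem IsHermitian.abs_re_diag_le_re_diag_cfc_abs {A : Matrix n n ℂ} (hA : A.IsHermitian)
    (i : n) :
    |(A i i).re| ≤ (cfc (fun x : ℝ => |x|) A i i).re := by
  have hsa := hA.isSelfAdjoint
  have hle : 0 ≤ cfc (fun x : ℝ => |x| - x) A :=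
    cfc_nonneg fun x _ => sub_nonneg.2 (le_abs_self x)
  have hge : 0 ≤ cfc (fun x : ℝ => |x| + x) A :=
    cfc_nonneg fun x _ => neg_le_iff_add_nonneg'.1 (neg_abs_le x)
  rw [cfc_sub _ _ A, cfc_id' ℝ A] at hle
  rw [cfc_add A (fun x : ℝ => |x|) (fun x => x), cfc_id' ℝ A] at hge
  have h1 := hle.posSemidef.re_diag_nonneg i
  have h2 := hge.posSemidef.re_diag_nonneg i
  simp only [sub_apply, add_apply, Complex.sub_re, Complex.add_re] at h1 h2
  exact abs_le.2 ⟨by linarith, by linarith⟩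

theorem re_trace_diagonal_ofReal_mul (f : n → ℝ) (M : Matrix n n ℂ) :
    ((diagonal fun i => (f i : ℂ)) * M).trace.re = ∑ i, f i * (M i i).re := by
  simp [trace, diagonal_mul, Complex.re_sum]

theorem diagonal_indicator_mul_diagonal_mul_diagonal_indicator (p : n → Prop)
    [DecidablePred p] (f : n → ℂ) :
    (diagonal fun i => if p i then (1 : ℂ) else 0) * diagonal f *
        (diagonal fun i => if p i then (1 : ℂ) else 0) =
      diagonal fun i => if p i then f i else 0 := by
  simp only [diagonal_mul_diagonal]
  congr 1
  funext i
  split_ifs <;> simp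

end

variable {d : ℕ} {A : Matrix (Fin d) (Fin d) ℂ}

theorem IsHermitian.traceNorm_eq_re_trace_cfc_abs (hA : A.IsHermitian) :
    traceNorm A = (cfc (fun x : ℝ => |x|) A).trace.re := by
  have hsqrt : traceNorm A = (cfc Real.sqrt (Aᴴ * A)).trace.re := by
    rw [(posSemidef_conjTranspose_mul_self A).1.cfc_eq]; rfl
  rw [hsqrt, hA.eq, ← sq, ← cfc_comp_pow Real.sqrt 2 A (by fun_prop) hA.isSelfAdjoint]
  simp only [Real.sqrt_sq_eq_abs]

theorem IsHermitian.sum_abs_re_diag_le_traceNorm (hA : A.IsHermitian) :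
    ∑ i, |(A i i).re| ≤ traceNorm A := by
  rw [hA.traceNorm_eq_re_trace_cfc_abs, trace, Complex.re_sum]
  exact Finset.sum_le_sum fun i _ => hA.abs_re_diag_le_re_diag_cfc_abs i

theorem IsHermitian.abs_sum_mul_re_diag_le (hA : A.IsHermitian) {w : Fin d → ℝ} {b : ℝ}
    (hb : 0 ≤ b) (hw : ∀ i, |w i| ≤ b) :
    |∑ i, w i * (A i i).re| ≤ b * traceNorm A :=
  calc |∑ i, w i * (A i i).re| ≤ ∑ i, |w i| * |(A i i).re| := by
        simpa only [abs_mul] using Finset.abs_sum_le_sum_abs (fun i => w i * (A i i).re) Finset.univ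
    _ ≤ ∑ i, b * |(A i i).re| :=
        Finset.sum_le_sum fun i _ => mul_le_mul_of_nonneg_right (hw i) (abs_nonneg _)
    _ ≤ b * traceNorm A := by
        rw [← Finset.mul_sum]
        exact mul_le_mul_of_nonneg_left hA.sum_abs_re_diag_le_traceNorm hb

end Matrix

theorem truncated_energy_lower_bound_general {d : ℕ}
    (e : Fin d → ℝ) (he : ∀ i, 0 ≤ e i)
    (ρ σ : Matrix (Fin d) (Fin d) ℂ) (hρ : IsDensity ρ) (hσ : IsDensity σ)
    (ε : ℝ) (ebar : ℝ) (hebar : 0 ≤ ebar)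
    -- the Hamiltonian H = ∑ₙ eₙ |eₙ⟩⟨eₙ| in its eigenbasis
    (H : Matrix (Fin d) (Fin d) ℂ) (hH : H = Matrix.diagonal (fun i => (e i : ℂ)))
    -- the spectral projection P_ē onto eigenspaces with energy ≤ ē
    (P : Matrix (Fin d) (Fin d) ℂ)
    (hP : P = Matrix.diagonal (fun i => if e i ≤ ebar then (1 : ℂ) else 0))
    (hclose : (1 / 2) * traceNorm (σ - ρ) ≤ ε) :
    ((σ * H).trace).re ≥ ((P * H * P * ρ).trace).re - 2 * ε * ebar := by
  set c : Fin d → ℝ := fun i => if e i ≤ ebar then e i else 0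
  have hPHP : P * H * P = diagonal fun i => (c i : ℂ) := by
    rw [hH, hP, diagonal_indicator_mul_diagonal_mul_diagonal_indicator]
    simp only [c, apply_ite, Complex.ofReal_zero]
  have hc_abs : ∀ i, |c i| ≤ ebar := fun i => by
    simp only [c]; split_ifs with h
    · rwa [abs_of_nonneg (he i)]
    · rwa [abs_zero]
  have hc_le : ∀ i, c i ≤ e i := fun i => by
    simp only [c]; split_ifs
    exacts [le_rfl, he i]
  have hcut : ∑ i, c i * (σ i i).re ≤ ∑ i, e i * (σ i i).re :=
    Finset.sum_le_sum fun i _ => mul_le_mul_of_nonneg_right (hc_le i) (hσ.1.re_diag_nonneg i)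
  have hshift := (hσ.1.1.sub hρ.1.1).abs_sum_mul_re_diag_le hebar hc_abs
  simp only [Matrix.sub_apply, Complex.sub_re, mul_sub, Finset.sum_sub_distrib] at hshift
  have hdist : ebar * traceNorm (σ - ρ) ≤ 2 * ε * ebar := by
    linarith [mul_le_mul_of_nonneg_left hclose hebar]
  rw [hPHP, trace_mul_comm σ, hH, re_trace_diagonal_ofReal_mul, re_trace_diagonal_ofReal_mul]
  linarith [(abs_le.1 hshift).1]

theorem truncated_energy_lower_bound {d : ℕ}
    (e : Fin d → ℝ) (he : ∀ i, 0 ≤ e i) (hmono : Monotone e)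
    (ρ σ : Matrix (Fin d) (Fin d) ℂ) (hρ : IsDensity ρ) (hσ : IsDensity σ)
    (ε : ℝ) (hε : 0 ≤ ε) (ebar : ℝ) (hebar : 0 ≤ ebar)
    -- the Hamiltonian H = ∑ₙ eₙ |eₙ⟩⟨eₙ| in its eigenbasis
    (H : Matrix (Fin d) (Fin d) ℂ) (hH : H = Matrix.diagonal (fun i => (e i : ℂ)))
    -- the spectral projection P_ē onto eigenspaces with energy ≤ ē
    (P : Matrix (Fin d) (Fin d) ℂ)
    (hP : P = Matrix.diagonal (fun i => if e i ≤ ebar then (1 : ℂ) else 0))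
    (hclose : (1 / 2) * traceNorm (σ - ρ) ≤ ε) :
    ((σ * H).trace).re ≥ ((P * H * P * ρ).trace).re - 2 * ε * ebar :=
  truncated_energy_lower_bound_general e he ρ σ hρ hσ ε ebar hebar H hH P hP hclose
end
end

section
/- The weak duality of the minimum-energy SDP: for a Hamiltonian matrix H ≥ 0 on ℂ^d, a density matrix ρ, and ε ≥ 0, if (A, X, Y) is feasible for the primal (A ≥ 0, tr A = 1, (tr X + tr Y)/2 ≤ 2ε, and the block matrix [[X, −(ρ−A)],[−(ρ−A), Y]] ≥ 0) and (y, z, M) is feasible for the dual (z ≥ 0, M†M ≤ I, (z/2)(M+M†) − y·I ≤ H), then tr(AH) ≥ tr(ρ[(z/2)(M+M†) − y·I]) − 2zε. -/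
/-! Write `B = ρ - A` and `G = (z/2)(M + Mᴴ) - y`. Compressing the positive block matrix by the
row `[1, M]` gives `tr (B (M + Mᴴ)) ≤ tr X + tr (M Y Mᴴ)`, and the contraction `Mᴴ M ≤ 1` bounds
`tr (M Y Mᴴ)` by `tr Y`, so `Re tr (B (M + Mᴴ)) ≤ 4ε`. As `tr B = 0`,
`tr (ρ G) = tr (A G) + (z/2) tr (B (M + Mᴴ))`, and `tr (A G) ≤ tr (A H)` because `A ≥ 0` and
`H - G ≥ 0`. -/

open Matrix
open scoped ComplexOrder

namespace Matrix

variable {m n 𝕜 : Type*} [Fintype m] [Fintype n] [RCLike 𝕜]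

lemma PosSemidef.trace_mul_nonneg {A B : Matrix n n 𝕜} (hA : A.PosSemidef) (hB : B.PosSemidef) :
    0 ≤ (A * B).trace := by
  classical
  open scoped MatrixOrder in
  obtain ⟨S, hS, hSB⟩ : ∃ S : Matrix n n 𝕜, Sᴴ = S ∧ S * S = B :=
    ⟨CFC.sqrt B, (CFC.sqrt_nonneg B).isSelfAdjoint, CFC.sqrt_mul_sqrt_self B hB.nonneg⟩
  have h := (hA.mul_mul_conjTranspose_same S).trace_nonneg
  rwa [hS, trace_mul_cycle, hSB, trace_mul_comm] at h

lemma PosSemidef.trace_mul_mul_conjTranspose_le [DecidableEq n] {Y : Matrix n n 𝕜}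
    (hY : Y.PosSemidef) {M : Matrix m n 𝕜} (hM : (1 - Mᴴ * M).PosSemidef) :
    (M * Y * Mᴴ).trace ≤ Y.trace := by
  have h := hY.trace_mul_nonneg hM
  rwa [Matrix.mul_sub, Matrix.mul_one, trace_sub, ← Matrix.mul_assoc, trace_mul_cycle,
    sub_nonneg] at h

lemma PosSemidef.fromBlocks_compress {X : Matrix m m 𝕜} {C : Matrix m n 𝕜} {D : Matrix n m 𝕜}
    {Y : Matrix n n 𝕜} (h : (fromBlocks X C D Y).PosSemidef) (M : Matrix m n 𝕜) :
    (X + C * Mᴴ + M * D + M * Y * Mᴴ).PosSemidef := by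
  classical
  have h' := h.mul_mul_conjTranspose_same (fromCols 1 M)
  rw [conjTranspose_fromCols_eq_fromRows_conjTranspose, fromCols_mul_fromBlocks,
    fromCols_mul_fromRows] at h'
  convert h' using 1
  simp only [Matrix.one_mul, conjTranspose_one, Matrix.mul_one, Matrix.add_mul]
  abel

lemma PosSemidef.trace_mul_add_conjTranspose_le_of_fromBlocks [DecidableEq n]
    {X Y B M : Matrix n n 𝕜} (hblock : (fromBlocks X (-B) (-B) Y).PosSemidef)
    (hM : (1 - Mᴴ * M).PosSemidef) :
    (B * (M + Mᴴ)).trace ≤ X.trace + Y.trace := by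
  have hY : Y.PosSemidef := hblock.submatrix Sum.inr
  have h := (hblock.fromBlocks_compress M).trace_nonneg
  rw [Matrix.mul_neg, Matrix.neg_mul, ← sub_eq_add_neg, ← sub_eq_add_neg, trace_add, trace_sub,
    trace_sub, trace_mul_comm M B] at h
  calc (B * (M + Mᴴ)).trace ≤ X.trace + (M * Y * Mᴴ).trace := by
        rw [Matrix.mul_add, trace_add]; linear_combination h
    _ ≤ X.trace + Y.trace := add_le_add_right (hY.trace_mul_mul_conjTranspose_le hM) _

end Matrix

theorem sdp_weak_duality_primal_dual_general {d : ℕ}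
    (H ρ A X Y M : Matrix (Fin d) (Fin d) ℂ) (y z ε : ℝ)
    (hρtr : ρ.trace = 1)
    -- primal feasibility
    (hA : A.PosSemidef) (hAtr : A.trace = 1)
    (hXY : ((X.trace).re + (Y.trace).re) / 2 ≤ 2 * ε)
    (hblock : (Matrix.fromBlocks X (-(ρ - A)) (-(ρ - A)) Y).PosSemidef)
    -- dual feasibility
    (hz : 0 ≤ z)
    (hM : ((1 : Matrix (Fin d) (Fin d) ℂ) - Mᴴ * M).PosSemidef)
    (hfeas : (H - (((z : ℂ) / 2) • (M + Mᴴ) - (y : ℂ) • 1)).PosSemidef) :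
    ((A * H).trace).re ≥
      ((ρ * (((z : ℂ) / 2) • (M + Mᴴ) - (y : ℂ) • 1)).trace).re - 2 * z * ε := by
  set G := ((z : ℂ) / 2) • (M + Mᴴ) - (y : ℂ) • 1
  have hAG : (A * G).trace.re ≤ (A * H).trace.re := by
    have h := hA.trace_mul_nonneg hfeas
    rw [Matrix.mul_sub, trace_sub, sub_nonneg] at h
    exact (Complex.le_def.mp h).1
  have hρG : (ρ * G).trace = (A * G).trace + ((z / 2 : ℝ) : ℂ) * ((ρ - A) * (M + Mᴴ)).trace := by
    have htr : (ρ - A).trace = 0 := by rw [trace_sub, hρtr, hAtr, sub_self]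
    rw [← sub_eq_iff_eq_add', ← trace_sub, ← Matrix.sub_mul, Matrix.mul_sub, Matrix.mul_smul,
      Matrix.mul_smul, Matrix.mul_one, trace_sub, trace_smul, trace_smul, htr]
    push_cast
    simp only [smul_eq_mul, mul_zero, sub_zero]
  have hcross : ((ρ - A) * (M + Mᴴ)).trace.re ≤ 4 * ε := by
    have h := (Complex.le_def.mp (hblock.trace_mul_add_conjTranspose_le_of_fromBlocks hM)).1
    rw [Complex.add_re] at h
    linarith
  have hzcross := mul_le_mul_of_nonneg_left hcross (by positivity : 0 ≤ z / 2)
  rw [hρG, Complex.add_re, Complex.re_ofReal_mul]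
  linarith

theorem sdp_weak_duality_primal_dual {d : ℕ}
    (H ρ A X Y M : Matrix (Fin d) (Fin d) ℂ) (y z ε : ℝ)
    (hH : H.PosSemidef) (hρ : ρ.PosSemidef) (hρtr : ρ.trace = 1)
    (hε : 0 ≤ ε)
    -- primal feasibility
    (hA : A.PosSemidef) (hAtr : A.trace = 1)
    (hXY : ((X.trace).re + (Y.trace).re) / 2 ≤ 2 * ε)
    (hblock : (Matrix.fromBlocks X (-(ρ - A)) (-(ρ - A)) Y).PosSemidef)
    -- dual feasibility
    (hz : 0 ≤ z)
    (hM : ((1 : Matrix (Fin d) (Fin d) ℂ) - Mᴴ * M).PosSemidef)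
    (hfeas : (H - (((z : ℂ) / 2) • (M + Mᴴ) - (y : ℂ) • 1)).PosSemidef) :
    ((A * H).trace).re ≥
      ((ρ * (((z : ℂ) / 2) • (M + Mᴴ) - (y : ℂ) • 1)).trace).re - 2 * z * ε :=
  sdp_weak_duality_primal_dual_general H ρ A X Y M y z ε hρtr hA hAtr hXY hblock hz hM hfeas
end
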